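/- (Top shift S⁻, inverse shift of a) Let ψ = d+e-a-b-c-1 and η = (a-1)(bc+ψf)/(a(d+e-a) + bc - de + ψf). For parameters ensuring convergence and f ≠ 0, η ≠ 0, the denominator of η nonzero, one has ₄F₃(a,b,c,f+1; d,e,f; 1) = (1 + bc/(ψf)) · ₄F₃(a-1,b,c,η+1; d,e,η; 1). -/

import Mathlib

open Complex

/-- Pochhammer (rising factorial) symbol. -/
noncomputable def poch (a : ℂ) (n : ℕ) : ℂ := ∏ i ∈ Finset.range n, (a + i)

/-- General term of the ₃F₂ series at unit argument. -/
noncomputable def term32 (a b c d e : ℂ) (n : ℕ) : ℂ :=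
  (poch a n * poch b n * poch c n) / ((n.factorial : ℂ) * poch d n * poch e n)

/-- ₃F₂ at unit argument. -/
noncomputable def hyp32 (a b c d e : ℂ) : ℂ := ∑' n : ℕ, term32 a b c d e n

/-- General term of the ₄F₃ series at unit argument. -/
noncomputable def term43 (a₁ a₂ a₃ a₄ b₁ b₂ b₃ : ℂ) (n : ℕ) : ℂ :=
  (poch a₁ n * poch a₂ n * poch a₃ n * poch a₄ n) /
    ((n.factorial : ℂ) * poch b₁ n * poch b₂ n * poch b₃ n)

/-- ₄F₃ at unit argument. -/
noncomputable def hyp43 (a₁ a₂ a₃ a₄ b₁ b₂ b₃ : ℂ) : ℂ := ∑' n : ℕ, term43 a₁ a₂ a₃ a₄ b₁ b₂ b₃ n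

/-- `x` is not a nonpositive integer (equivalently, not a pole of `Γ`). -/
def notNonposInt (x : ℂ) : Prop := ∀ n : ℕ, x ≠ -(n : ℂ)

/-!
Write `uₙ` for the `n`-th term of `₃F₂(a-1, b, c; d, e; 1)`. The `n`-th terms of the two `₄F₃`
series are `tₙ = uₙ (a-1+n)(f+n)/((a-1)f)` and `uₙ (η+n)/η`, and `η` is chosen exactly so that
`(a-1) f ψ` times the difference of the two sides is `Gₙ - Gₙ₊₁`, where
`Gₙ = n (d+n-1)(e+n-1) uₙ` (note `G₀ = 0` and `Gₙ₊₁ = (a-1+n)(b+n)(c+n) uₙ`).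
Since the differences are summable, `Gₙ` converges; its limit vanishes because `n tₙ` is
asymptotic to a nonzero multiple of `Gₙ` while `∑ tₙ` converges.
-/

open Filter Topology

theorem tendsto_of_summable_sub_succ {G : Type*} [TopologicalSpace G] [AddCommGroup G]
    [IsTopologicalAddGroup G] {g : ℕ → G} (h : Summable fun n ↦ g n - g (n + 1)) :
    Tendsto g atTop (𝓝 (g 0 - ∑' n, (g n - g (n + 1)))) := by
  have hpartial := (tendsto_const_nhds (x := g 0)).sub h.hasSum.tendsto_sum_nat
  simpa only [Finset.sum_range_sub', sub_sub_cancel] using hpartial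

theorem Summable.eq_zero_of_tendsto_natCast_mul {𝕜 : Type*} [RCLike 𝕜] {f : ℕ → 𝕜} {L : 𝕜}
    (hf : Summable f) (hL : Tendsto (fun n : ℕ ↦ (n : 𝕜) * f n) atTop (𝓝 L)) : L = 0 := by
  by_contra hL0
  have hpos : 0 < ‖L‖ / 2 := by positivity
  have hbound : ∀ᶠ n : ℕ in atTop, ‖L‖ / 2 ≤ ‖(n : 𝕜) * f n‖ :=
    hL.norm.eventually (eventually_ge_nhds (half_lt_self (norm_pos_iff.2 hL0)))
  refine Real.not_summable_natCast_inv ((summable_mul_left_iff hpos.ne').1 ?_)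
  refine .of_norm_bounded_eventually_nat hf.norm ?_
  filter_upwards [hbound, eventually_gt_atTop 0] with n hn hn0
  rw [norm_mul, RCLike.norm_natCast] at hn
  rw [Real.norm_of_nonneg (by positivity), ← div_eq_mul_inv, div_le_iff₀ (by positivity)]
  linarith

lemma poch_succ (x : ℂ) (n : ℕ) : poch x (n + 1) = poch x n * (x + n) :=
  Finset.prod_range_succ _ n

lemma poch_add_one (x : ℂ) (n : ℕ) : x * poch (x + 1) n = poch x n * (x + n) := by
  rw [← poch_succ, poch, poch, Finset.prod_range_succ', mul_comm]
  simp only [Nat.cast_add, Nat.cast_one, Nat.cast_zero, add_zero, add_assoc, add_comm (1 : ℂ)]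

lemma poch_ne_zero {x : ℂ} (hx : notNonposInt x) (n : ℕ) : poch x n ≠ 0 :=
  Finset.prod_ne_zero_iff.2 fun i _ h ↦ hx i (eq_neg_of_add_eq_zero_left h)

lemma term32_succ (a b c d e : ℂ) (n : ℕ) :
    term32 a b c d e (n + 1) =
      (a + n) * (b + n) * (c + n) / ((n + 1) * (d + n) * (e + n)) * term32 a b c d e n := by
  simp only [term32, poch_succ, Nat.factorial_succ, Nat.cast_mul, Nat.cast_succ]
  rw [div_mul_div_comm]
  ring_nf

lemma term32_add_one {a : ℂ} (ha : a ≠ 0) (b c d e : ℂ) (n : ℕ) :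
    term32 (a + 1) b c d e n = (a + n) / a * term32 a b c d e n := by
  have h : poch (a + 1) n = poch a n * (a + n) / a := by
    rw [eq_div_iff ha, mul_comm, poch_add_one]
  rw [term32, term32, h, div_mul_div_comm]
  ring_nf

lemma term43_add_one_self {f : ℂ} (hf : f ≠ 0) (hfp : notNonposInt f) (a b c d e : ℂ) (n : ℕ) :
    term43 a b c (f + 1) d e f n = (f + n) / f * term32 a b c d e n := by
  have h : poch (f + 1) n = poch f n * (f + n) / f := by
    rw [eq_div_iff hf, mul_comm, poch_add_one]
  have hpoch := poch_ne_zero hfp n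
  rw [term43, term32, h]
  field_simp

noncomputable def telescoper (a b c d e : ℂ) (n : ℕ) : ℂ :=
  n * (d + n - 1) * (e + n - 1) * term32 (a - 1) b c d e n

lemma telescoper_zero (a b c d e : ℂ) : telescoper a b c d e 0 = 0 := by
  simp [telescoper]

lemma telescoper_succ (a b c : ℂ) {d e : ℂ} (hd : notNonposInt d) (he : notNonposInt e) (n : ℕ) :
    telescoper a b c d e (n + 1) = (a - 1 + n) * (b + n) * (c + n) * term32 (a - 1) b c d e n := by
  have hdn : d + n ≠ 0 := fun h ↦ hd n (eq_neg_of_add_eq_zero_left h)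
  have hen : e + n ≠ 0 := fun h ↦ he n (eq_neg_of_add_eq_zero_left h)
  have hn : (n : ℂ) + 1 ≠ 0 := Nat.cast_add_one_ne_zero n
  rw [telescoper, term32_succ]
  push_cast
  field_simp
  ring

lemma term43_eq_term32_sub_one {a f : ℂ} (ha : a - 1 ≠ 0) (hf : f ≠ 0) (hfp : notNonposInt f)
    (b c d e : ℂ) (n : ℕ) :
    term43 a b c (f + 1) d e f n =
      (a - 1 + n) * (f + n) / ((a - 1) * f) * term32 (a - 1) b c d e n := by
  conv_lhs => rw [← sub_add_cancel a 1]
  rw [term43_add_one_self hf hfp, term32_add_one ha]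
  field_simp

lemma contiguity_coeff_identity {a b c d e f ψ η : ℂ} (n : ℂ)
    (hψ : ψ = d + e - a - b - c - 1)
    (hη : η = (a - 1) * (b * c + ψ * f) / (a * (d + e - a) + b * c - d * e + ψ * f))
    (ha : a - 1 ≠ 0) (hf : f ≠ 0) (hψ0 : ψ ≠ 0) (hη0 : η ≠ 0) :
    (a - 1) * f * ψ *
        ((a - 1 + n) * (f + n) / ((a - 1) * f) - (1 + b * c / (ψ * f)) * ((η + n) / η))
      = n * (d + n - 1) * (e + n - 1) - (a - 1 + n) * (b + n) * (c + n) := by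
  have hD : a * (d + e - a) + b * c - d * e + ψ * f ≠ 0 := fun h ↦ hη0 (by rw [hη, h, div_zero])
  have hbc : b * c + ψ * f ≠ 0 := fun h ↦ hη0 (by rw [hη, h, mul_zero, zero_div])
  have hCη : (1 + b * c / (ψ * f)) * ((η + n) / η) = (b * c + ψ * f) / (ψ * f)
      + n * (a * (d + e - a) + b * c - d * e + ψ * f) / ((a - 1) * ψ * f) := by
    rw [hη]
    field_simp
    ring
  rw [hCη]
  field_simp
  rw [hψ]
  ring

lemma telescoper_sub_telescoper_succ {a b c d e f ψ η : ℂ}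
    (hψ : ψ = d + e - a - b - c - 1)
    (hη : η = (a - 1) * (b * c + ψ * f) / (a * (d + e - a) + b * c - d * e + ψ * f))
    (ha : a - 1 ≠ 0) (hf : f ≠ 0) (hψ0 : ψ ≠ 0) (hη0 : η ≠ 0)
    (hd : notNonposInt d) (he : notNonposInt e) (hfp : notNonposInt f) (hηp : notNonposInt η)
    (n : ℕ) :
    telescoper a b c d e n - telescoper a b c d e (n + 1) =
      (a - 1) * f * ψ * (term43 a b c (f + 1) d e f n
        - (1 + b * c / (ψ * f)) * term43 (a - 1) b c (η + 1) d e η n) := by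
  rw [telescoper_succ a b c hd he, telescoper, term43_eq_term32_sub_one ha hf hfp,
    term43_add_one_self hη0 hηp]
  linear_combination
    term32 (a - 1) b c d e n * (contiguity_coeff_identity n hψ hη ha hf hψ0 hη0).symm

lemma tendsto_natCast_mul_term43 {a b c d e f L : ℂ} (hd : notNonposInt d) (he : notNonposInt e)
    (ha : a - 1 ≠ 0) (hf : f ≠ 0) (hfp : notNonposInt f)
    (hL : Tendsto (telescoper a b c d e) atTop (𝓝 L)) :
    Tendsto (fun n : ℕ ↦ n * term43 a b c (f + 1) d e f n) atTop (𝓝 (L / ((a - 1) * f))) := by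
  rw [← tendsto_add_atTop_iff_nat 1]
  have hratio (x y : ℂ) : Tendsto (fun n : ℕ ↦ (x + n) / (y + n)) atTop (𝓝 1) := by
    simpa using tendsto_add_mul_div_add_mul_atTop_nhds x y 1 one_ne_zero
  have hlim := ((hratio a d).mul (hratio (f + 1) e)).mul
    (((tendsto_add_atTop_iff_nat 1).2 hL).div_const ((a - 1) * f))
  rw [one_mul, one_mul] at hlim
  refine hlim.congr fun n ↦ ?_
  have hdn : d + n ≠ 0 := fun h ↦ hd n (eq_neg_of_add_eq_zero_left h)
  have hen : e + n ≠ 0 := fun h ↦ he n (eq_neg_of_add_eq_zero_left h)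
  rw [telescoper, term43_eq_term32_sub_one ha hf hfp]
  push_cast
  field_simp
  ring

theorem stmt14_general (a b c d e f : ℂ) (ψ η : ℂ)
    (hψ : ψ = d + e - a - b - c - 1)
    (hη : η = (a - 1) * (b * c + ψ * f) / (a * (d + e - a) + b * c - d * e + ψ * f))
    (hf : f ≠ 0) (hψ0 : ψ ≠ 0) (hη0 : η ≠ 0)
    (hd : notNonposInt d) (he : notNonposInt e) (hfp : notNonposInt f)
    (hηp : notNonposInt η)
    (h1 : Summable (term43 a b c (f + 1) d e f))
    (h2 : Summable (term43 (a - 1) b c (η + 1) d e η)) :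
    hyp43 a b c (f + 1) d e f =
      (1 + b * c / (ψ * f)) * hyp43 (a - 1) b c (η + 1) d e η := by
  have ha : a - 1 ≠ 0 := fun h ↦ hη0 (by rw [hη, h, zero_mul, zero_div])
  set C := 1 + b * c / (ψ * f)
  set v := fun n ↦ term43 a b c (f + 1) d e f n - C * term43 (a - 1) b c (η + 1) d e η n
  have hv : Summable v := h1.sub (h2.mul_left C)
  have htel := telescoper_sub_telescoper_succ hψ hη ha hf hψ0 hη0 hd he hfp hηp
  have hG : Tendsto (telescoper a b c d e) atTop (𝓝 (-((a - 1) * f * ψ * ∑' n, v n))) := by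
    have := tendsto_of_summable_sub_succ (g := telescoper a b c d e)
      (by simpa only [htel] using hv.mul_left ((a - 1) * f * ψ))
    simpa only [htel, telescoper_zero, tsum_mul_left, zero_sub] using this
  have hvanish : -((a - 1) * f * ψ * ∑' n, v n) / ((a - 1) * f) = 0 :=
    h1.eq_zero_of_tendsto_natCast_mul (tendsto_natCast_mul_term43 hd he ha hf hfp hG)
  have hsum : ∑' n, v n = 0 := by simpa [ha, hf, hψ0] using hvanish
  rw [hyp43, hyp43, ← sub_eq_zero, ← tsum_mul_left, ← h1.tsum_sub (h2.mul_left C)]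
  exact hsum

theorem stmt14 (a b c d e f : ℂ) (ψ η : ℂ)
    (hψ : ψ = d + e - a - b - c - 1)
    (hden : a * (d + e - a) + b * c - d * e + ψ * f ≠ 0)
    (hη : η = (a - 1) * (b * c + ψ * f) / (a * (d + e - a) + b * c - d * e + ψ * f))
    (hf : f ≠ 0) (hψ0 : ψ ≠ 0) (hη0 : η ≠ 0)
    (hconv : 0 < ψ.re)
    (hd : notNonposInt d) (he : notNonposInt e) (hfp : notNonposInt f)
    (hηp : notNonposInt η)
    (h1 : Summable (term43 a b c (f + 1) d e f))
    (h2 : Summable (term43 (a - 1) b c (η + 1) d e η)) :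
    hyp43 a b c (f + 1) d e f =
      (1 + b * c / (ψ * f)) * hyp43 (a - 1) b c (η + 1) d e η :=
  stmt14_general a b c d e f ψ η hψ hη hf hψ0 hη0 hd he hfp hηp h1 h2
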